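/- arXiv:2305.12727 — 3 statements merged into one kernel-verified Lean document; each statement's English description precedes it below -/
import Mathlib

section
/- Let T, L, P > 0, d_R, d_F ∈ ℕ with d_R, d_F ≥ 1, let v_R, v_F : [0,T] → ℝ_{>0}, and set V_L := inf_{s∈[0,T]} v_R(s)v_F(s). Let (h,t,ρ) be a discretization with n ≥ 2, T = Σ_{j=1}^n h_j, t = Σ₊h, and ρ_j = 2LP h_j² for all j ∈ [1,n]. Then for every k ∈ [1,n], ΔC(h,t,ρ;k) ≥ 2^{d_R} V_L / ( (LP)^{d_F+d_R} · h_k^{d_F+2d_R} ). -/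
noncomputable section

/-- The local error term `𝓔_j(h,t,ρ)` of the Euler scheme error bound:
`𝓔_0 = e^{LT} ρ_0/2` and `𝓔_j = e^{L(T-t_j)}(e^{L h_j}-1)(P h_j + ρ_j/2 + ρ_j/(2 L h_j))`. -/
def calE (T L P : ℝ) (h t ρ : ℕ → ℝ) (j : ℕ) : ℝ :=
  if j = 0 then Real.exp (L * T) * ρ 0 / 2
  else Real.exp (L * (T - t j)) * (Real.exp (L * h j) - 1) *
    (P * h j + ρ j / 2 + ρ j / (2 * L * h j))

/-- The error bound `E(h,t,ρ) = ∑_{j=0}^n 𝓔_j(h,t,ρ)` for a discretization of length `n`. -/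
def Ebound (T L P : ℝ) (n : ℕ) (h t ρ : ℕ → ℝ) : ℝ :=
  ∑ j ∈ Finset.range (n + 1), calE T L P h t ρ j

/-- The `h`-component of the subdivision rule `ψ[h,t,ρ;k]`: for `k = 0` the step
sizes are unchanged, for `k ∈ [1,n]` the entry `h_k` is replaced by the two
entries `h_k/2, h_k/2` and later entries are shifted. -/
def psiH (h : ℕ → ℝ) (k : ℕ) : ℕ → ℝ := fun j =>
  if k = 0 then h j
  else if j < k then h j
  else if j ≤ k + 1 then h k / 2
  else h (j - 1)

/-- The `t`-component of the subdivision rule `ψ[h,t,ρ;k]`: for `k = 0` the nodes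
are unchanged, for `k ∈ [1,n]` the node `t_k - h_k/2` is inserted between
`t_{k-1}` and `t_k`. -/
def psiT (h t : ℕ → ℝ) (k : ℕ) : ℕ → ℝ := fun j =>
  if k = 0 then t j
  else if j < k then t j
  else if j = k then t k - h k / 2
  else t (j - 1)

/-- The `ρ`-component of the subdivision rule `ψ[h,t,ρ;k]`: for `k = 0` the entry
`ρ_0` is replaced by `ρ_0/4`, for `k ∈ [1,n]` the entry `ρ_k` is replaced by the
two entries `ρ_k/4, ρ_k/4` and later entries are shifted. -/
def psiRho (ρ : ℕ → ℝ) (k : ℕ) : ℕ → ℝ := fun j =>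
  if k = 0 then (if j = 0 then ρ 0 / 4 else ρ j)
  else if j < k then ρ j
  else if j ≤ k + 1 then ρ k / 4
  else ρ (j - 1)

/-- The length of the discretization produced by `ψ[h,t,ρ;k]` from one of length `n`:
`n` if `k = 0`, and `n + 1` otherwise. -/
def newn (n k : ℕ) : ℕ := if k = 0 then n else n + 1

/-- `ΔE(h,t,ρ;k) = E(ψ[h,t,ρ;k]) - E(h,t,ρ)`. -/
def deltaE (T L P : ℝ) (n : ℕ) (h t ρ : ℕ → ℝ) (k : ℕ) : ℝ :=
  Ebound T L P (newn n k) (psiH h k) (psiT h t k) (psiRho ρ k) - Ebound T L P n h t ρ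

/-- The cost estimator `C(h,t,ρ) = ∑_{j=0}^{n-1} (v_R(t_j)/ρ_j^{d_R}) ·
(v_F(t_j) h_{j+1}^{d_F} / ρ_{j+1}^{d_F})`. -/
def costC (dR dF : ℕ) (vR vF : ℝ → ℝ) (n : ℕ) (h t ρ : ℕ → ℝ) : ℝ :=
  ∑ j ∈ Finset.range n,
    (vR (t j) / ρ j ^ dR) * (vF (t j) * h (j + 1) ^ dF / ρ (j + 1) ^ dF)

/-- `ΔC(h,t,ρ;k) = C(ψ[h,t,ρ;k]) - C(h,t,ρ)`. -/
def deltaC (dR dF : ℕ) (vR vF : ℝ → ℝ) (n : ℕ) (h t ρ : ℕ → ℝ) (k : ℕ) : ℝ :=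
  costC dR dF vR vF (newn n k) (psiH h k) (psiT h t k) (psiRho ρ k) -
    costC dR dF vR vF n h t ρ

theorem stmt_16 (T L P : ℝ) (hT : 0 < T) (hL : 0 < L) (hP : 0 < P)
    (dR dF : ℕ) (hdR : 1 ≤ dR) (hdF : 1 ≤ dF)
    (vR vF : ℝ → ℝ)
    (hvR : ∀ s ∈ Set.Icc (0 : ℝ) T, 0 < vR s)
    (hvF : ∀ s ∈ Set.Icc (0 : ℝ) T, 0 < vF s)
    (n : ℕ) (hn : 2 ≤ n) (h t ρ : ℕ → ℝ)
    (hh : ∀ j, 1 ≤ j → j ≤ n → 0 < h j)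
    (htnn : ∀ j, j ≤ n → 0 ≤ t j)
    (hρ : ∀ j, j ≤ n → 0 < ρ j)
    (hsum : ∑ j ∈ Finset.Icc 1 n, h j = T)
    (hcum : ∀ k, k ≤ n → t k = ∑ j ∈ Finset.Icc 1 k, h j)
    (hcoup : ∀ j, 1 ≤ j → j ≤ n → ρ j = 2 * L * P * (h j) ^ 2) :
    ∀ k, 1 ≤ k → k ≤ n →
      2 ^ dR * sInf ((fun s => vR s * vF s) '' Set.Icc (0 : ℝ) T) /
          ((L * P) ^ (dF + dR) * h k ^ (dF + 2 * dR)) ≤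
        deltaC dR dF vR vF n h t ρ k := by
  intro k hk1 hkn
  have hk0 : k ≠ 0 := by omega
  set G : ℕ → ℝ := fun j =>
    (vR (t j) / ρ j ^ dR) * (vF (t j) * h (j + 1) ^ dF / ρ (j + 1) ^ dF) with hG
  set G' : ℕ → ℝ := fun j =>
    (vR (psiT h t k j) / psiRho ρ k j ^ dR) *
      (vF (psiT h t k j) * psiH h k (j + 1) ^ dF / psiRho ρ k (j + 1) ^ dF) with hG'
  have hdelta : deltaC dR dF vR vF n h t ρ k
      = ∑ j ∈ Finset.range (n + 1), G' j - ∑ j ∈ Finset.range n, G j := by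
    simp only [deltaC, costC, newn, if_neg hk0, hG, hG']
  -- bounds on the nodes
  have htT : ∀ j, j ≤ n → t j ≤ T := by
    intro j hj
    rw [hcum j hj, ← hsum]
    apply Finset.sum_le_sum_of_subset_of_nonneg
    · exact Finset.Icc_subset_Icc_right hj
    · intro i hi _
      exact (hh i (Finset.mem_Icc.mp (by simpa using hi)).1
        (Finset.mem_Icc.mp (by simpa using hi)).2).le
  have htIcc : ∀ j, j ≤ n → t j ∈ Set.Icc (0 : ℝ) T := fun j hj => ⟨htnn j hj, htT j hj⟩
  have hkt : h k ≤ t k := by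
    rw [hcum k hkn]
    apply Finset.single_le_sum (f := h) ?_ (Finset.mem_Icc.mpr ⟨hk1, le_rfl⟩)
    intro i hi
    exact (hh i (Finset.mem_Icc.mp hi).1 (le_trans (Finset.mem_Icc.mp hi).2 hkn)).le
  have hhk : 0 < h k := hh k hk1 hkn
  have hτmem : t k - h k / 2 ∈ Set.Icc (0 : ℝ) T :=
    ⟨by linarith, by have := htT k hkn; linarith⟩
  -- nonnegativity of the old terms
  have hGnn : ∀ j, j < n → 0 ≤ G j := by
    intro j hj
    have h1 := (hvR _ (htIcc j (by omega))).le
    have h2 := (hvF _ (htIcc j (by omega))).le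
    have h3 := (hρ j (by omega)).le
    have h4 := (hρ (j + 1) (by omega)).le
    have h5 := (hh (j + 1) (by omega) (by omega)).le
    exact mul_nonneg (div_nonneg h1 (pow_nonneg h3 _))
      (div_nonneg (mul_nonneg h2 (pow_nonneg h5 _)) (pow_nonneg h4 _))
  -- the reindexing map
  set σ : ℕ → ℕ := fun j => if j < k then j else j + 1 with hσ
  have himg : (Finset.range n).image σ = (Finset.range (n + 1)).erase k := by
    ext a
    simp only [Finset.mem_image, Finset.mem_erase, Finset.mem_range, hσ]
    constructor
    · rintro ⟨i, hi, rfl⟩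
      by_cases hik : i < k <;> simp [hik] <;> omega
    · rintro ⟨hne, hlt⟩
      by_cases hak : a < k
      · exact ⟨a, by omega, by simp [hak]⟩
      · exact ⟨a - 1, by omega, by rw [if_neg (by omega)]; omega⟩
  have hinj : Set.InjOn σ (Finset.range n) := by
    intro a _ b _ hab
    simp only [hσ] at hab
    by_cases ha : a < k <;> by_cases hb : b < k <;> simp [ha, hb] at hab <;> omega
  -- pointwise comparison
  have hpt : ∀ j ∈ Finset.range n, G j ≤ G' (σ j) := by
    intro j hj
    rw [Finset.mem_range] at hj
    rcases lt_trichotomy j (k - 1) with hjk | hjk | hjk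
    · -- j + 1 < k : terms coincide
      have h1 : j < k := by omega
      have h2 : j + 1 < k := by omega
      simp [hσ, hG, hG', psiT, psiH, psiRho, hk0, h1, h2]
    · -- j = k - 1
      subst hjk
      have h1 : k - 1 < k := by omega
      have h2 : k - 1 + 1 = k := by omega
      have hρk : 0 < ρ k := hρ k hkn
      have hρk1 : ρ (k - 1) ≠ 0 := (hρ (k - 1) (by omega)).ne'
      have hρkne : ρ k ≠ 0 := hρk.ne'
      have key : G' (σ (k - 1)) = 2 ^ dF * G (k - 1) := by
        simp only [hσ, if_pos h1, hG', hG, psiT, psiH, psiRho, if_neg hk0, if_pos h1, h2,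
          lt_irrefl, if_neg (lt_irrefl k), if_pos (le_refl k), if_pos (Nat.le_succ k), if_false]
        field_simp
        ring_nf
        try simp [show (4:ℝ) = 2 ^ 2 from by norm_num, ← pow_mul, Nat.mul_comm]
        rw [pow_mul]
        field_simp
      rw [key]
      have h1le : (1 : ℝ) ≤ 2 ^ dF := one_le_pow₀ (by norm_num)
      exact le_mul_of_one_le_left (hGnn _ (by omega)) h1le
    · -- j ≥ k
      have hjk' : k ≤ j := by omega
      rcases eq_or_lt_of_le hjk' with hjk2 | hjk2
      · -- j = k
        subst hjk2
        have hρjne : ρ k ≠ 0 := (hρ k hkn).ne'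
        have hρj1 : ρ (k + 1) ≠ 0 := (hρ (k + 1) (by omega)).ne'
        have key : G' (σ k) = 4 ^ dR * G k := by
          simp only [hσ, if_neg (lt_irrefl k), hG', hG, psiT, psiH, psiRho, if_neg hk0]
          rw [if_neg (by omega : ¬ k + 1 < k), if_neg (by omega : k + 1 ≠ k),
            if_neg (by omega : ¬ k + 1 < k), if_pos (by omega : k + 1 ≤ k + 1),
            if_neg (by omega : ¬ k + 1 + 1 < k), if_neg (by omega : ¬ k + 1 + 1 ≤ k + 1),
            if_neg (by omega : ¬ k + 1 + 1 < k), if_neg (by omega : ¬ k + 1 + 1 ≤ k + 1)]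
          simp only [Nat.add_sub_cancel]
          field_simp
          ring_nf
          try simp [show (4:ℝ) = 2 ^ 2 from by norm_num, ← pow_mul, Nat.mul_comm]
        rw [key]
        have h1le : (1 : ℝ) ≤ 4 ^ dR := one_le_pow₀ (by norm_num)
        exact le_mul_of_one_le_left (hGnn _ hj) h1le
      · -- j > k : terms coincide up to shift
        have key : G' (σ j) = G j := by
          simp only [hσ, if_neg (by omega : ¬ j < k), hG', hG, psiT, psiH, psiRho, if_neg hk0]
          rw [if_neg (by omega : ¬ j + 1 < k), if_neg (by omega : ¬ j + 1 = k),
            if_neg (by omega : ¬ j + 1 < k), if_neg (by omega : ¬ j + 1 ≤ k + 1),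
            if_neg (by omega : ¬ j + 1 + 1 < k), if_neg (by omega : ¬ j + 1 + 1 ≤ k + 1),
            if_neg (by omega : ¬ j + 1 + 1 < k), if_neg (by omega : ¬ j + 1 + 1 ≤ k + 1)]
          simp only [Nat.add_sub_cancel]
        rw [key]
    done
  -- sum comparison
  have hsumle : ∑ j ∈ Finset.range n, G j ≤ ∑ j ∈ (Finset.range (n + 1)).erase k, G' j := by
    rw [← himg, Finset.sum_image (fun a ha b hb hab => hinj (by simpa using ha) (by simpa using hb) hab)]
    exact Finset.sum_le_sum hpt
  have hkmem : k ∈ Finset.range (n + 1) := Finset.mem_range.mpr (by omega)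
  have hsplit : ∑ j ∈ Finset.range (n + 1), G' j
      = G' k + ∑ j ∈ (Finset.range (n + 1)).erase k, G' j :=
    (Finset.add_sum_erase _ _ hkmem).symm
  -- value of the new term
  have hρk : ρ k = 2 * L * P * h k ^ 2 := hcoup k hk1 hkn
  have hGk : G' k = 2 ^ dR * (vR (t k - h k / 2) * vF (t k - h k / 2)) /
      ((L * P) ^ (dF + dR) * h k ^ (dF + 2 * dR)) := by
    simp only [hG', psiT, psiH, psiRho, if_neg hk0, if_neg (lt_irrefl k), if_pos rfl,
      if_pos (le_refl k)]
    rw [if_neg (by omega : ¬ k + 1 < k), if_pos (by omega : k + 1 ≤ k + 1),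
      if_neg (by omega : ¬ k + 1 < k), if_pos (by omega : k + 1 ≤ k + 1)]
    rw [if_pos (Nat.le_succ k), hρk]
    have hL0 : L ≠ 0 := ne_of_gt hL
    have hP0 : P ≠ 0 := ne_of_gt hP
    have hhk0 : h k ≠ 0 := ne_of_gt hhk
    field_simp
    ring_nf
    try simp [show (4:ℝ) = 2 ^ 2 from by norm_num, ← pow_mul, Nat.mul_comm]
    ring
  -- the infimum is at most the value at the new node
  have hinf : sInf ((fun s => vR s * vF s) '' Set.Icc (0 : ℝ) T)
      ≤ vR (t k - h k / 2) * vF (t k - h k / 2) := by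
    apply csInf_le
    · refine ⟨0, ?_⟩
      rintro x ⟨s, hs, rfl⟩
      exact (mul_pos (hvR s hs) (hvF s hs)).le
    · exact ⟨t k - h k / 2, hτmem, rfl⟩
  -- put everything together
  have hD : 0 < (L * P) ^ (dF + dR) * h k ^ (dF + 2 * dR) := by positivity
  have hfinal : 2 ^ dR * sInf ((fun s => vR s * vF s) '' Set.Icc (0 : ℝ) T) /
      ((L * P) ^ (dF + dR) * h k ^ (dF + 2 * dR)) ≤ G' k := by
    rw [hGk]
    apply (div_le_div_iff_of_pos_right hD).mpr
    exact mul_le_mul_of_nonneg_left hinf (by positivity)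
  linarith [hsumle, hfinal, hdelta.ge, hdelta.le, hsplit.le, hsplit.ge]
end
end

section
/- Let T, L, P > 0, d_R, d_F ∈ ℕ with d_R, d_F ≥ 1, let v_R, v_F : [0,T] → ℝ_{>0}, and let (h,t,ρ) be a discretization with n ≥ 1, T = Σ_{j=1}^n h_j, t = Σ₊h, and ρ_j = 2LP h_j² for all j ∈ [1,n]. Let (h',t',ρ') := ψ[h,t,ρ;0]. Then for every i ∈ [1,n], ΔC(h',t',ρ';i) ≤ 4^{d_R} · ΔC(h,t,ρ;i). -/
noncomputable section

lemma sumA (F G : ℕ → ℝ) (n m : ℕ) (hin : m + 1 ≤ n)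
    (hFG : ∀ j, j < m → F j = G j) :
    ∑ j ∈ Finset.range (n+1), F j - ∑ j ∈ Finset.range n, G j
      = F m + F (m+1) - G m + ∑ j ∈ Finset.Ico (m+1) n, (F (j+1) - G j) := by
  have e1 : ∑ j ∈ Finset.range (n+1), F j
      = (∑ j ∈ Finset.range m, F j + F m + F (m+1)) + ∑ j ∈ Finset.Ico (m+2) (n+1), F j := by
    rw [← Finset.sum_range_succ, ← Finset.sum_range_succ,
      Finset.sum_range_add_sum_Ico _ (by omega)]
  have e2 : ∑ j ∈ Finset.range n, G j
      = (∑ j ∈ Finset.range m, G j + G m) + ∑ j ∈ Finset.Ico (m+1) n, G j := by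
    rw [← Finset.sum_range_succ, Finset.sum_range_add_sum_Ico _ (by omega)]
  have e3 : ∑ j ∈ Finset.Ico (m+2) (n+1), F j = ∑ j ∈ Finset.Ico (m+1) n, F (j+1) := by
    rw [Finset.sum_Ico_eq_sum_range, Finset.sum_Ico_eq_sum_range]
    have : n + 1 - (m + 2) = n - (m + 1) := by omega
    rw [this]
    exact Finset.sum_congr rfl fun j _ => by congr 1; omega
  have e4 : ∑ j ∈ Finset.range m, F j = ∑ j ∈ Finset.range m, G j :=
    Finset.sum_congr rfl fun j hj => hFG j (Finset.mem_range.mp hj)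
  rw [e1, e2, e3, e4, Finset.sum_sub_distrib]
  ring

lemma dcForm (dR dF : ℕ) (vR vF : ℝ → ℝ) (n m : ℕ) (hin : m + 1 ≤ n)
    (h t ρ : ℕ → ℝ) :
    deltaC dR dF vR vF n h t ρ (m+1) =
      vR (t m) / ρ m ^ dR * (vF (t m) * (h (m+1) / 2) ^ dF / (ρ (m+1) / 4) ^ dF)
      - vR (t m) / ρ m ^ dR * (vF (t m) * h (m+1) ^ dF / ρ (m+1) ^ dF)
      + vR (t (m+1) - h (m+1) / 2) / (ρ (m+1) / 4) ^ dR *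
          (vF (t (m+1) - h (m+1) / 2) * (h (m+1) / 2) ^ dF / (ρ (m+1) / 4) ^ dF)
      + ∑ j ∈ Finset.Ico (m+1) n,
          ((if j = m + 1 then vR (t j) / (ρ (m+1) / 4) ^ dR else vR (t j) / ρ j ^ dR)
              * (vF (t j) * h (j+1) ^ dF / ρ (j+1) ^ dF)
            - vR (t j) / ρ j ^ dR * (vF (t j) * h (j+1) ^ dF / ρ (j+1) ^ dF)) := by
  have hnew : newn n (m+1) = n + 1 := by simp [newn]
  rw [deltaC, hnew, costC, costC]
  rw [sumA _ _ n m hin ?side]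
  case side =>
    intro j hj
    have h1 : ¬ (m + 1 = 0) := by omega
    have h2 : j < m + 1 := by omega
    have h3 : j + 1 < m + 1 := by omega
    simp [psiH, psiT, psiRho, h1, h2, h3]
  congr 1
  · -- F m + F (m+1) - G m = first three terms
    have h1 : ¬ (m + 1 = 0) := by omega
    have h2 : m < m + 1 := by omega
    simp [psiH, psiT, psiRho, h1, h2]
    ring
  · apply Finset.sum_congr rfl
    intro j hj
    simp only [Finset.mem_Ico] at hj
    by_cases hje : j = m + 1
    · subst hje
      have h1 : ¬ (m + 1 = 0) := by omega
      simp [psiH, psiT, psiRho, h1, show ¬ (m+1+1 < m) from by omega]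
    · have h1 : ¬ (m + 1 = 0) := by omega
      have h2 : ¬ (j + 1 < m + 1) := by omega
      have h3 : ¬ (j + 1 = m + 1) := by omega
      have h4 : ¬ (j + 1 ≤ m + 2) := by omega
      have h5 : ¬ (j + 2 ≤ m + 2) := by omega
      simp [psiH, psiT, psiRho, h1, h2, h3, h4, h5, hje, show ¬ (j+1 < m) from by omega,
        show ¬ (j = m) from by omega]

theorem stmt_18 (T L P : ℝ) (hT : 0 < T) (hL : 0 < L) (hP : 0 < P)
    (dR dF : ℕ) (hdR : 1 ≤ dR) (hdF : 1 ≤ dF)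
    (vR vF : ℝ → ℝ)
    (hvR : ∀ s ∈ Set.Icc (0 : ℝ) T, 0 < vR s)
    (hvF : ∀ s ∈ Set.Icc (0 : ℝ) T, 0 < vF s)
    (n : ℕ) (hn : 1 ≤ n) (h t ρ : ℕ → ℝ)
    (hh : ∀ j, 1 ≤ j → j ≤ n → 0 < h j)
    (htnn : ∀ j, j ≤ n → 0 ≤ t j)
    (hρ : ∀ j, j ≤ n → 0 < ρ j)
    (hsum : ∑ j ∈ Finset.Icc 1 n, h j = T)
    (hcum : ∀ k, k ≤ n → t k = ∑ j ∈ Finset.Icc 1 k, h j)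
    (hcoup : ∀ j, 1 ≤ j → j ≤ n → ρ j = 2 * L * P * (h j) ^ 2) :
    ∀ i, 1 ≤ i → i ≤ n →
      deltaC dR dF vR vF (newn n 0) (psiH h 0) (psiT h t 0) (psiRho ρ 0) i ≤
        4 ^ dR * deltaC dR dF vR vF n h t ρ i := by

  intro i hi1 hin
  obtain ⟨m, rfl⟩ : ∃ m, i = m + 1 := ⟨i - 1, by omega⟩
  have hps : psiH h 0 = h := funext fun j => by simp [psiH]
  have hpt : psiT h t 0 = t := funext fun j => by simp [psiT]
  have hnn : newn n 0 = n := by simp [newn]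
  rw [hps, hpt, hnn]
  set ρ'' := psiRho ρ 0 with hρ''def
  have hr'' : ∀ j, j ≠ 0 → ρ'' j = ρ j := fun j hj => by simp [hρ''def, psiRho, hj]
  have hr0 : ρ'' 0 = ρ 0 / 4 := by simp [hρ''def, psiRho]
  rw [dcForm dR dF vR vF n m hin h t ρ'', dcForm dR dF vR vF n m hin h t ρ]
  -- membership facts
  have htmem : ∀ k, k ≤ n → t k ∈ Set.Icc (0:ℝ) T := by
    intro k hk
    refine ⟨htnn k hk, ?_⟩
    rw [hcum k hk, ← hsum]
    exact Finset.sum_le_sum_of_subset_of_nonneg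
      (Finset.Icc_subset_Icc_right hk)
      (fun j hj hnj => (hh j (Finset.mem_Icc.mp hj).1 (Finset.mem_Icc.mp hj).2).le)
  have hhm1 : 0 < h (m+1) := hh (m+1) (by omega) hin
  have hρm : 0 < ρ m := hρ m (by omega)
  have hρm1 : 0 < ρ (m+1) := hρ (m+1) hin
  have htm : t m ∈ Set.Icc (0:ℝ) T := htmem m (by omega)
  have htstep : t (m+1) = t m + h (m+1) := by
    rw [hcum (m+1) hin, hcum m (by omega), Finset.sum_Icc_succ_top (by omega : 1 ≤ m+1)]
  have htmid : t (m+1) - h (m+1)/2 ∈ Set.Icc (0:ℝ) T := by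
    have h1 := (htmem (m+1) hin).2
    have h0 := (htm).1
    constructor <;> [skip; skip] <;> rw [htstep] at * <;> linarith
  have hvRtm : 0 < vR (t m) := hvR _ htm
  have hvFtm : 0 < vF (t m) := hvF _ htm
  have hvRmid : 0 < vR (t (m+1) - h (m+1)/2) := hvR _ htmid
  have hvFmid : 0 < vF (t (m+1) - h (m+1)/2) := hvF _ htmid
  have h4 : (1:ℝ) ≤ 4 ^ dR := one_le_pow₀ (by norm_num)
  -- names for the pieces
  set A := vR (t m) / ρ m ^ dR * (vF (t m) * h (m+1) ^ dF / ρ (m+1) ^ dF) with hA_def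
  set B := vR (t (m+1) - h (m+1) / 2) / (ρ (m+1) / 4) ^ dR *
      (vF (t (m+1) - h (m+1) / 2) * (h (m+1) / 2) ^ dF / (ρ (m+1) / 4) ^ dF) with hB_def
  have hp4F : ((4:ℝ)) ^ dF = 2 ^ dF * 2 ^ dF := by rw [← mul_pow]; norm_num
  have hX1 : vR (t m) / ρ m ^ dR * (vF (t m) * (h (m+1) / 2) ^ dF / (ρ (m+1) / 4) ^ dF)
      = 2 ^ dF * A := by
    rw [hA_def, div_pow, div_pow, hp4F]
    field_simp
  have hAnn : 0 ≤ A := by positivity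
  have hBnn : 0 ≤ B := by positivity
  -- the tail sums
  have hSnn : 0 ≤ ∑ j ∈ Finset.Ico (m+1) n,
      ((if j = m + 1 then vR (t j) / (ρ (m+1) / 4) ^ dR else vR (t j) / ρ j ^ dR)
          * (vF (t j) * h (j+1) ^ dF / ρ (j+1) ^ dF)
        - vR (t j) / ρ j ^ dR * (vF (t j) * h (j+1) ^ dF / ρ (j+1) ^ dF)) := by
    apply Finset.sum_nonneg
    intro j hj
    simp only [Finset.mem_Ico] at hj
    by_cases hje : j = m + 1
    · subst hje
      rw [if_pos rfl]
      have hρj1 : 0 < ρ (m+1+1) := hρ (m+1+1) (by omega)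
      have hhj1 : 0 < h (m+1+1) := hh (m+1+1) (by omega) (by omega)
      have hvRtj : 0 < vR (t (m+1)) := hvR _ (htmem (m+1) (by omega))
      have hvFtj : 0 < vF (t (m+1)) := hvF _ (htmem (m+1) (by omega))
      have hle : vR (t (m+1)) / ρ (m+1) ^ dR ≤ vR (t (m+1)) / (ρ (m+1) / 4) ^ dR :=
        div_le_div_of_nonneg_left hvRtj.le (by positivity)
          (pow_le_pow_left₀ (by positivity) (by linarith) dR)
      have hW : 0 ≤ vF (t (m+1)) * h (m+1+1) ^ dF / ρ (m+1+1) ^ dF := by positivity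
      have := mul_le_mul_of_nonneg_right hle hW
      linarith
    · rw [if_neg hje]; simp
  have hSeq : (∑ j ∈ Finset.Ico (m+1) n,
      ((if j = m + 1 then vR (t j) / (ρ'' (m+1) / 4) ^ dR else vR (t j) / ρ'' j ^ dR)
          * (vF (t j) * h (j+1) ^ dF / ρ'' (j+1) ^ dF)
        - vR (t j) / ρ'' j ^ dR * (vF (t j) * h (j+1) ^ dF / ρ'' (j+1) ^ dF)))
      = ∑ j ∈ Finset.Ico (m+1) n,
      ((if j = m + 1 then vR (t j) / (ρ (m+1) / 4) ^ dR else vR (t j) / ρ j ^ dR)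
          * (vF (t j) * h (j+1) ^ dF / ρ (j+1) ^ dF)
        - vR (t j) / ρ j ^ dR * (vF (t j) * h (j+1) ^ dF / ρ (j+1) ^ dF)) := by
    apply Finset.sum_congr rfl
    intro j hj
    simp only [Finset.mem_Ico] at hj
    rw [hr'' j (by omega), hr'' (j+1) (by omega), hr'' (m+1) (by omega)]
  rw [hSeq, hr'' (m+1) (by omega)]
  rw [hX1]
  set S := ∑ j ∈ Finset.Ico (m+1) n,
      ((if j = m + 1 then vR (t j) / (ρ (m+1) / 4) ^ dR else vR (t j) / ρ j ^ dR)
          * (vF (t j) * h (j+1) ^ dF / ρ (j+1) ^ dF)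
        - vR (t j) / ρ j ^ dR * (vF (t j) * h (j+1) ^ dF / ρ (j+1) ^ dF)) with hS_def
  by_cases hm : m = 0
  · subst hm
    rw [hr0]
    have hq : ∀ x : ℝ, x / (ρ 0 / 4) ^ dR = 4 ^ dR * (x / ρ 0 ^ dR) := by
      intro x
      rw [div_pow, div_div_eq_mul_div]
      ring
    have e1 : vR (t 0) / (ρ 0 / 4) ^ dR *
        (vF (t 0) * (h (0+1) / 2) ^ dF / (ρ (0+1) / 4) ^ dF) = 4 ^ dR * (2 ^ dF * A) := by
      rw [hq, mul_assoc, hX1]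
    have e2 : vR (t 0) / (ρ 0 / 4) ^ dR *
        (vF (t 0) * h (0+1) ^ dF / ρ (0+1) ^ dF) = 4 ^ dR * A := by
      rw [hq, mul_assoc, ← hA_def]
    rw [e1, e2]
    have h1 := mul_nonneg (sub_nonneg.mpr h4) (add_nonneg hBnn hSnn)
    have h2 : (4 ^ dR - 1) * (B + S)
        = 4 ^ dR * (2 ^ dF * A - A + B + S)
          - (4 ^ dR * (2 ^ dF * A) - 4 ^ dR * A + B + S) := by ring
    linarith
  · rw [hr'' m hm]
    have h2F : (1:ℝ) ≤ 2 ^ dF := one_le_pow₀ (by norm_num)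
    have hD : 0 ≤ 2 ^ dF * A - A := by
      have h1 := mul_nonneg (sub_nonneg.mpr h2F) hAnn
      have h2 : (2 ^ dF - 1) * A = 2 ^ dF * A - A := by ring
      linarith
    have h1 := mul_nonneg (sub_nonneg.mpr h4) (add_nonneg (add_nonneg hD hBnn) hSnn)
    have h2 : (4 ^ dR - 1) * (2 ^ dF * A - A + B + S)
        = 4 ^ dR * (2 ^ dF * A - A + B + S) - (2 ^ dF * A - A + B + S) := by ring
    linarith
end
end

section
/- Let d ∈ ℕ with d ≥ 1 and L > 0. Consider the differential inclusion on [0,1] in ℝ^d given by ẋ_i(t) ∈ [0.9 L x_i(t), L x_i(t)] for each coordinate i ∈ {1,…,d} and almost every t ∈ (0,1), with initial condition x(0) = (1,…,1). Then for every t ∈ [0,1], the reachable set equals the hypercube R^F(t) = [exp(0.9 L t), exp(L t)]^d, i.e. the set of points y ∈ ℝ^d with exp(0.9 L t) ≤ y_i ≤ exp(L t) for all i. -/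
open Real MeasureTheory Set Pointwise

noncomputable section

/-- The grid `ρ ℤ^d`. -/
def grid (d : ℕ) (ρ : ℝ) : Set (Fin d → ℝ) :=
  {x | ∀ i, ∃ m : ℤ, x i = ρ * m}

/-- The projector `π_ρ(A) = (A + B_{ρ/2}(0)) ∩ ρℤ^d` (closed ball in the max norm). -/
def proj (d : ℕ) (ρ : ℝ) (A : Set (Fin d → ℝ)) : Set (Fin d → ℝ) :=
  (A + Metric.closedBall (0 : Fin d → ℝ) (ρ / 2)) ∩ grid d ρ

/-- `x : ℝ → ℝ^d` is a solution of `ẋ ∈ F(x)`, `x(0) ∈ X₀` on `[0,T]`: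
an absolutely continuous (i.e. `W^{1,1}`) function, written as the integral of an
integrable a.e. derivative `x'` with `x'(t) ∈ F(x(t))` for a.e. `t ∈ (0,T)`. -/
def IsSolution (d : ℕ) (F : (Fin d → ℝ) → Set (Fin d → ℝ)) (X0 : Set (Fin d → ℝ))
    (T : ℝ) (x : ℝ → Fin d → ℝ) : Prop :=
  x 0 ∈ X0 ∧ ∃ x' : ℝ → Fin d → ℝ,
    IntegrableOn x' (Icc 0 T) volume ∧
    (∀ t ∈ Icc 0 T, x t = x 0 + ∫ s in Ioc (0 : ℝ) t, x' s) ∧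
    (∀ᵐ t ∂(volume.restrict (Ioo (0 : ℝ) T)), x' t ∈ F (x t))

/-- The reachable set `R^F(t)` of the inclusion at time `t`. -/
def reach (d : ℕ) (F : (Fin d → ℝ) → Set (Fin d → ℝ)) (X0 : Set (Fin d → ℝ))
    (T t : ℝ) : Set (Fin d → ℝ) :=
  {y | ∃ x : ℝ → Fin d → ℝ, IsSolution d F X0 T x ∧ x t = y}

/-- The discrete reachable sets of the fully discrete Euler scheme:
`R(0) = π_{ρ₀}(X₀)`, `R(k+1) = ⋃_{y ∈ R(k)} π_{ρ_{k+1}}(y + h_{k+1} F(y))`. -/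
def discReach (d : ℕ) (F : (Fin d → ℝ) → Set (Fin d → ℝ)) (X0 : Set (Fin d → ℝ))
    (h ρ : ℕ → ℝ) : ℕ → Set (Fin d → ℝ)
  | 0 => proj d (ρ 0) X0
  | k + 1 => ⋃ y ∈ discReach d F X0 h ρ k,
      proj d (ρ (k + 1)) ((fun f => y + h (k + 1) • f) '' F y)


open Topology

lemma integral_pi_apply {d : ℕ} {s : Set ℝ} {g : ℝ → Fin d → ℝ}
    (hg : IntegrableOn g s volume) (i : Fin d) :
    (∫ τ in s, g τ) i = ∫ τ in s, g τ i := by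
  have := (ContinuousLinearMap.proj (R := ℝ) (φ := fun _ : Fin d => ℝ) i).integral_comp_comm hg
  simpa using this.symm

lemma primitive_hasDerivAt {U : ℝ → ℝ} (hUc : ContinuousOn U (Icc 0 1))
    {s : ℝ} (hs : s ∈ Ioo (0:ℝ) 1) :
    HasDerivAt (fun u => ∫ τ in Ioc (0:ℝ) u, U τ) (U s) s := by
  have hInt : IntervalIntegrable U volume 0 s := by
    have : IntegrableOn U (Icc 0 s) volume :=
      hUc.integrableOn_Icc.mono_set (Icc_subset_Icc le_rfl hs.2.le)
    exact (by rwa [uIcc_of_le hs.1.le] : IntegrableOn U (uIcc 0 s) volume).intervalIntegrable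
  have hmeas : StronglyMeasurableAtFilter U (𝓝 s) volume :=
    (hUc.mono Ioo_subset_Icc_self).stronglyMeasurableAtFilter isOpen_Ioo s hs
  have hcont : ContinuousAt U s := hUc.continuousAt (Icc_mem_nhds hs.1 hs.2)
  have H1 := intervalIntegral.integral_hasDerivAt_right hInt hmeas hcont
  apply H1.congr_of_eventuallyEq
  have : ∀ᶠ u in 𝓝 s, 0 < u := eventually_gt_nhds hs.1
  filter_upwards [this] with u hu
  rw [intervalIntegral.integral_of_le hu.le]

lemma gron_upper (K : ℝ) (hK : 0 < K) {t : ℝ} (ht0 : 0 ≤ t) (ht1 : t ≤ 1)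
    {U : ℝ → ℝ} (hUc : ContinuousOn U (Icc 0 1))
    (hcmp : ∀ s ∈ Icc 0 t, U s ≤ 1 + K * ∫ τ in Ioc (0:ℝ) s, U τ) :
    1 + K * ∫ τ in Ioc (0:ℝ) t, U τ ≤ exp (K * t) := by
  set W : ℝ → ℝ := fun s => 1 + K * ∫ τ in Ioc (0:ℝ) s, U τ with hWdef
  set φ : ℝ → ℝ := fun s => W s * exp (-(K * s)) with hφdef
  have hIcc : Icc (0:ℝ) t ⊆ Icc 0 1 := Icc_subset_Icc le_rfl ht1
  have hWc : ContinuousOn W (Icc 0 t) :=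
    continuousOn_const.add
      (continuousOn_const.mul ((intervalIntegral.continuousOn_primitive hUc.integrableOn_Icc).mono hIcc))
  have hφc : ContinuousOn φ (Icc 0 t) :=
    hWc.mul (Continuous.continuousOn (by continuity))
  have hder : ∀ s ∈ Ioo (0:ℝ) t, HasDerivAt φ (exp (-(K*s)) * (K * (U s - W s))) s := by
    intro s hs
    have hs1 : s ∈ Ioo (0:ℝ) 1 := ⟨hs.1, lt_of_lt_of_le hs.2 ht1⟩
    have h1 : HasDerivAt W (K * U s) s :=
      (((primitive_hasDerivAt hUc hs1).const_mul K).const_add 1)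
    have h2 : HasDerivAt (fun u => exp (-(K * u))) (exp (-(K * s)) * -K) s := by
      have := (((hasDerivAt_id s).const_mul K).neg).exp
      simpa using this
    have h3 := h1.mul h2
    refine HasDerivAt.congr_deriv h3 ?_
    ring
  have hanti : AntitoneOn φ (Icc 0 t) := by
    apply antitoneOn_of_deriv_nonpos (convex_Icc 0 t) hφc
    · intro s hs
      rw [interior_Icc] at hs
      exact (hder s hs).differentiableAt.differentiableWithinAt
    · intro s hs
      rw [interior_Icc] at hs
      rw [(hder s hs).deriv]
      have h1 : U s ≤ W s := hcmp s (Ioo_subset_Icc_self hs)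
      have h2 := exp_pos (-(K*s))
      nlinarith [mul_nonneg (mul_nonneg h2.le hK.le) (sub_nonneg.mpr h1)]
  have h0 : φ 0 = 1 := by simp [hφdef, hWdef]
  have hfin := hanti (left_mem_Icc.mpr ht0) (right_mem_Icc.mpr ht0) ht0
  rw [h0] at hfin
  have hkey : exp (-(K*t)) * exp (K*t) = 1 := by rw [← exp_add]; simp
  have hfin' : W t * exp (-(K*t)) ≤ 1 := hfin
  have hmul := mul_le_mul_of_nonneg_right hfin' (exp_pos (K*t)).le
  rw [mul_assoc, hkey, mul_one, one_mul] at hmul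
  exact hmul

lemma gron_lower (K : ℝ) (hK : 0 < K) {t : ℝ} (ht0 : 0 ≤ t) (ht1 : t ≤ 1)
    {U : ℝ → ℝ} (hUc : ContinuousOn U (Icc 0 1))
    (hcmp : ∀ s ∈ Icc 0 t, 1 + K * ∫ τ in Ioc (0:ℝ) s, U τ ≤ U s) :
    exp (K * t) ≤ 1 + K * ∫ τ in Ioc (0:ℝ) t, U τ := by
  set W : ℝ → ℝ := fun s => 1 + K * ∫ τ in Ioc (0:ℝ) s, U τ with hWdef
  set φ : ℝ → ℝ := fun s => W s * exp (-(K * s)) with hφdef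
  have hIcc : Icc (0:ℝ) t ⊆ Icc 0 1 := Icc_subset_Icc le_rfl ht1
  have hWc : ContinuousOn W (Icc 0 t) :=
    continuousOn_const.add
      (continuousOn_const.mul ((intervalIntegral.continuousOn_primitive hUc.integrableOn_Icc).mono hIcc))
  have hφc : ContinuousOn φ (Icc 0 t) :=
    hWc.mul (Continuous.continuousOn (by continuity))
  have hder : ∀ s ∈ Ioo (0:ℝ) t, HasDerivAt φ (exp (-(K*s)) * (K * (U s - W s))) s := by
    intro s hs
    have hs1 : s ∈ Ioo (0:ℝ) 1 := ⟨hs.1, lt_of_lt_of_le hs.2 ht1⟩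
    have h1 : HasDerivAt W (K * U s) s :=
      (((primitive_hasDerivAt hUc hs1).const_mul K).const_add 1)
    have h2 : HasDerivAt (fun u => exp (-(K * u))) (exp (-(K * s)) * -K) s := by
      have := (((hasDerivAt_id s).const_mul K).neg).exp
      simpa using this
    have h3 := h1.mul h2
    refine HasDerivAt.congr_deriv h3 ?_
    ring
  have hmono : MonotoneOn φ (Icc 0 t) := by
    apply monotoneOn_of_deriv_nonneg (convex_Icc 0 t) hφc
    · intro s hs
      rw [interior_Icc] at hs
      exact (hder s hs).differentiableAt.differentiableWithinAt
    · intro s hs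
      rw [interior_Icc] at hs
      rw [(hder s hs).deriv]
      have h1 : W s ≤ U s := hcmp s (Ioo_subset_Icc_self hs)
      have h2 := exp_pos (-(K*s))
      nlinarith [mul_nonneg (mul_nonneg h2.le hK.le) (sub_nonneg.mpr h1)]
  have h0 : φ 0 = 1 := by simp [hφdef, hWdef]
  have hfin := hmono (left_mem_Icc.mpr ht0) (right_mem_Icc.mpr ht0) ht0
  rw [h0] at hfin
  have hkey : exp (-(K*t)) * exp (K*t) = 1 := by rw [← exp_add]; simp
  have hfin' : 1 ≤ W t * exp (-(K*t)) := hfin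
  have hmul := mul_le_mul_of_nonneg_right hfin' (exp_pos (K*t)).le
  rw [mul_assoc, hkey, mul_one, one_mul] at hmul
  exact hmul

lemma scalar_gronwall (L : ℝ) (hL : 0 < L) {t : ℝ} (ht : t ∈ Icc (0:ℝ) 1)
    {f : ℝ → ℝ} (hf : IntegrableOn f (Icc 0 1) volume)
    {U : ℝ → ℝ} (hU : ∀ s, U s = 1 + ∫ τ in Ioc (0:ℝ) s, f τ)
    (hbd : ∀ᵐ s ∂(volume.restrict (Ioo (0:ℝ) 1)),
      f s ∈ uIcc (0.9 * L * U s) (L * U s)) :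
    exp (0.9 * L * t) ≤ U t ∧ U t ≤ exp (L * t) := by
  have hUc : ContinuousOn U (Icc 0 1) := by
    apply (continuousOn_const.add (intervalIntegral.continuousOn_primitive hf)).congr
    intro s _
    exact hU s
  have hU0 : U 0 = 1 := by rw [hU]; simp
  -- positivity
  have hpos : ∀ s ∈ Icc (0:ℝ) t, 0 < U s := by
    by_contra hcon
    push_neg at hcon
    obtain ⟨s₁, hs₁t, hs₁⟩ := hcon
    set P := {s | s ∈ Icc (0:ℝ) t ∧ U s ≤ 0} with hPdef
    have hPne : P.Nonempty := ⟨s₁, hs₁t, hs₁⟩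
    have hPbdd : BddBelow P := ⟨0, fun x hx => hx.1.1⟩
    have hPc : IsClosed P := by
      have : P = Icc 0 t ∩ U ⁻¹' (Iic 0) := rfl
      rw [this]
      exact ContinuousOn.preimage_isClosed_of_isClosed
        (hUc.mono (Icc_subset_Icc le_rfl ht.2)) isClosed_Icc isClosed_Iic
    set s₀ := sInf P with hs₀def
    have hs₀P : s₀ ∈ P := hPc.csInf_mem hPne hPbdd
    have h0P : (0:ℝ) ∉ P := fun h => by have := h.2; rw [hU0] at this; linarith
    have hs₀pos : 0 < s₀ := by
      rcases lt_or_eq_of_le hs₀P.1.1 with h | h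
      · exact h
      · exact absurd (h ▸ hs₀P) h0P
    have hUpos : ∀ s ∈ Ico (0:ℝ) s₀, 0 < U s := by
      intro s hs
      by_contra h
      push_neg at h
      have hmem : s ∈ P := ⟨⟨hs.1, le_trans hs.2.le hs₀P.1.2⟩, h⟩
      exact absurd (csInf_le hPbdd hmem) (not_le.mpr hs.2)
    have hae : ∀ᵐ τ ∂(volume.restrict (Ioo (0:ℝ) s₀)), 0 ≤ f τ := by
      have hsub : Ioo (0:ℝ) s₀ ⊆ Ioo 0 1 :=
        Ioo_subset_Ioo le_rfl (le_trans hs₀P.1.2 ht.2)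
      have h1 := ae_restrict_of_ae_restrict_of_subset hsub hbd
      have h2 := ae_restrict_mem (μ := volume) (measurableSet_Ioo : MeasurableSet (Ioo (0:ℝ) s₀))
      filter_upwards [h1, h2] with τ h1 h2
      have hU' : 0 < U τ := hUpos τ ⟨h2.1.le, h2.2⟩
      have hle : 0.9 * L * U τ ≤ L * U τ := by nlinarith
      rw [uIcc_of_le hle] at h1
      nlinarith [h1.1]
    have hge : (1:ℝ) ≤ U s₀ := by
      rw [hU]
      have : 0 ≤ ∫ τ in Ioc (0:ℝ) s₀, f τ := by
        rw [integral_Ioc_eq_integral_Ioo]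
        exact setIntegral_nonneg_of_ae_restrict hae
      linarith
    linarith [hs₀P.2]
  -- a.e. bounds on (0,t)
  have haeb : ∀ᵐ s ∂(volume.restrict (Ioo (0:ℝ) t)),
      0.9 * L * U s ≤ f s ∧ f s ≤ L * U s := by
    have hsub : Ioo (0:ℝ) t ⊆ Ioo 0 1 := Ioo_subset_Ioo le_rfl ht.2
    have h1 := ae_restrict_of_ae_restrict_of_subset hsub hbd
    have h2 := ae_restrict_mem (μ := volume) (measurableSet_Ioo : MeasurableSet (Ioo (0:ℝ) t))
    filter_upwards [h1, h2] with s h1 h2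
    have hU' : 0 < U s := hpos s (Ioo_subset_Icc_self h2)
    have hle : 0.9 * L * U s ≤ L * U s := by nlinarith
    rw [uIcc_of_le hle] at h1
    exact h1
  have hUiI : IntegrableOn U (Icc 0 1) volume := hUc.integrableOn_Icc
  -- comparisons
  have hcmpV : ∀ s ∈ Icc (0:ℝ) t, U s ≤ 1 + L * ∫ τ in Ioc (0:ℝ) s, U τ := by
    intro s hs
    have hsub1 : Ioo (0:ℝ) s ⊆ Icc 0 1 :=
      subset_trans Ioo_subset_Icc_self (Icc_subset_Icc le_rfl (hs.2.trans ht.2))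
    have hfi : IntegrableOn f (Ioo 0 s) volume := hf.mono_set hsub1
    have hUi : IntegrableOn (fun τ => L * U τ) (Ioo 0 s) volume :=
      (hUiI.mono_set hsub1).const_mul L
    have haes : ∀ᵐ τ ∂(volume.restrict (Ioo (0:ℝ) s)), f τ ≤ L * U τ := by
      have := ae_restrict_of_ae_restrict_of_subset
        (Ioo_subset_Ioo le_rfl hs.2) haeb
      filter_upwards [this] with τ h
      exact h.2
    have hmono := setIntegral_mono_ae_restrict hfi hUi haes
    rw [hU s, integral_Ioc_eq_integral_Ioo, integral_Ioc_eq_integral_Ioo]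
    rw [integral_const_mul] at hmono
    linarith
  have hcmpZ : ∀ s ∈ Icc (0:ℝ) t, 1 + 0.9 * L * ∫ τ in Ioc (0:ℝ) s, U τ ≤ U s := by
    intro s hs
    have hsub1 : Ioo (0:ℝ) s ⊆ Icc 0 1 :=
      subset_trans Ioo_subset_Icc_self (Icc_subset_Icc le_rfl (hs.2.trans ht.2))
    have hfi : IntegrableOn f (Ioo 0 s) volume := hf.mono_set hsub1
    have hUi : IntegrableOn (fun τ => 0.9 * L * U τ) (Ioo 0 s) volume :=
      (hUiI.mono_set hsub1).const_mul (0.9 * L)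
    have haes : ∀ᵐ τ ∂(volume.restrict (Ioo (0:ℝ) s)), 0.9 * L * U τ ≤ f τ := by
      have := ae_restrict_of_ae_restrict_of_subset
        (Ioo_subset_Ioo le_rfl hs.2) haeb
      filter_upwards [this] with τ h
      exact h.1
    have hmono := setIntegral_mono_ae_restrict hUi hfi haes
    rw [hU s, integral_Ioc_eq_integral_Ioo, integral_Ioc_eq_integral_Ioo]
    rw [integral_const_mul] at hmono
    linarith
  constructor
  · have h1 := gron_lower (0.9 * L) (by nlinarith) ht.1 ht.2 hUc hcmpZ
    have h2 := hcmpZ t (right_mem_Icc.mpr ht.1)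
    linarith
  · have h1 := gron_upper L hL ht.1 ht.2 hUc hcmpV
    have h2 := hcmpV t (right_mem_Icc.mpr ht.1)
    linarith

theorem stmt_19 (d : ℕ) (hd : 1 ≤ d) (L : ℝ) (hL : 0 < L) (t : ℝ)
    (ht : t ∈ Set.Icc (0 : ℝ) 1) :
    reach d (fun x => {v : Fin d → ℝ | ∀ i, v i ∈ Set.uIcc (0.9 * L * x i) (L * x i)})
        {fun _ => (1 : ℝ)} 1 t =
      {y : Fin d → ℝ | ∀ i, Real.exp (0.9 * L * t) ≤ y i ∧ y i ≤ Real.exp (L * t)} := by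
  ext y
  simp only [reach, Set.mem_setOf_eq]
  constructor
  · rintro ⟨x, ⟨hx0, x', hint, hrepr, haeF⟩, rfl⟩
    rw [mem_singleton_iff] at hx0
    intro i
    have hf : IntegrableOn (fun s => x' s i) (Icc 0 1) volume := by
      have h := (ContinuousLinearMap.proj (R := ℝ) (φ := fun _ : Fin d => ℝ) i).integrable_comp hint
      exact h
    have hU : ∀ s ∈ Icc (0:ℝ) 1, x s i = 1 + ∫ τ in Ioc (0:ℝ) s, x' τ i := by
      intro s hs
      have h2 : IntegrableOn x' (Ioc 0 s) volume :=
        hint.mono_set (subset_trans Ioc_subset_Icc_self (Icc_subset_Icc le_rfl hs.2))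
      have h3 := integral_pi_apply h2 i
      rw [hrepr s hs]
      simp only [Pi.add_apply, hx0, h3]
    have hbd : ∀ᵐ s ∂(volume.restrict (Ioo (0:ℝ) 1)),
        x' s i ∈ uIcc (0.9 * L * (1 + ∫ τ in Ioc (0:ℝ) s, x' τ i))
          (L * (1 + ∫ τ in Ioc (0:ℝ) s, x' τ i)) := by
      filter_upwards [haeF, ae_restrict_mem (μ := volume)
        (measurableSet_Ioo : MeasurableSet (Ioo (0:ℝ) 1))] with s h1 h2
      have h3 := h1 i
      rwa [hU s (Ioo_subset_Icc_self h2)] at h3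
    obtain ⟨hlow, hhigh⟩ := scalar_gronwall L hL ht hf (fun s => rfl) hbd
    rw [hU t ht]
    exact ⟨hlow, hhigh⟩
  · intro hy
    have key : ∀ c : Fin d → ℝ, (∀ i, 0.9 * L ≤ c i ∧ c i ≤ L) →
        ∃ x : ℝ → Fin d → ℝ,
          IsSolution d (fun x => {v : Fin d → ℝ | ∀ i, v i ∈ Set.uIcc (0.9 * L * x i) (L * x i)})
            {fun _ => (1 : ℝ)} 1 x ∧ x t = fun i => Real.exp (c i * t) := by
      intro c hc
      have hcont : Continuous (fun s : ℝ => fun i : Fin d => c i * Real.exp (c i * s)) :=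
        continuous_pi fun i => continuous_const.mul
          (Real.continuous_exp.comp (continuous_const.mul continuous_id))
      refine ⟨fun s i => Real.exp (c i * s),
        ⟨?_, fun s i => c i * Real.exp (c i * s), hcont.integrableOn_Icc, ?_, ?_⟩, rfl⟩
      · rw [mem_singleton_iff]
        funext i
        simp
      · intro s hs
        funext i
        have hI : IntegrableOn (fun τ => fun i : Fin d => c i * Real.exp (c i * τ))
            (Ioc 0 s) volume :=
          hcont.integrableOn_Icc.mono_set
            (subset_trans Ioc_subset_Icc_self (Icc_subset_Icc le_rfl hs.2))
        have h3 := integral_pi_apply hI i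
        simp only [Pi.add_apply, h3]
        have hD : ∀ τ ∈ uIcc (0:ℝ) s,
            HasDerivAt (fun u => Real.exp (c i * u)) (c i * Real.exp (c i * τ)) τ := by
          intro τ _
          simpa [mul_comm] using ((hasDerivAt_id τ).const_mul (c i)).exp
        have hIng : IntervalIntegrable (fun τ => c i * Real.exp (c i * τ)) volume 0 s :=
          (continuous_const.mul
            (Real.continuous_exp.comp (continuous_const.mul continuous_id))).intervalIntegrable 0 s
        rw [← intervalIntegral.integral_of_le hs.1,
          intervalIntegral.integral_eq_sub_of_hasDerivAt hD hIng]
        ring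
      · refine Filter.Eventually.of_forall fun s => fun i => ?_
        show c i * Real.exp (c i * s) ∈
          uIcc (0.9 * L * Real.exp (c i * s)) (L * Real.exp (c i * s))
        have he := Real.exp_pos (c i * s)
        have hle : 0.9 * L * Real.exp (c i * s) ≤ L * Real.exp (c i * s) := by nlinarith
        rw [uIcc_of_le hle]
        exact mem_Icc.mpr ⟨by nlinarith [(hc i).1], by nlinarith [(hc i).2]⟩
    rcases eq_or_lt_of_le ht.1 with h0 | h0
    · obtain ⟨x, hsol, hxt⟩ := key (fun _ => L) (fun i => ⟨by linarith, le_rfl⟩)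
      refine ⟨x, hsol, ?_⟩
      rw [hxt]
      funext i
      have hyi := hy i
      rw [← h0] at hyi ⊢
      simp only [mul_zero, Real.exp_zero] at hyi ⊢
      linarith [hyi.1, hyi.2]
    · set c : Fin d → ℝ := fun i => Real.log (y i) / t with hcdef
      have hyi : ∀ i, 0 < y i := fun i => lt_of_lt_of_le (Real.exp_pos _) (hy i).1
      have hc : ∀ i, 0.9 * L ≤ c i ∧ c i ≤ L := by
        intro i
        have h1 : 0.9 * L * t ≤ Real.log (y i) := by
          rw [← Real.log_exp (0.9 * L * t)]
          exact Real.log_le_log (Real.exp_pos _) (hy i).1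
        have h2 : Real.log (y i) ≤ L * t := by
          rw [← Real.log_exp (L * t)]
          exact Real.log_le_log (hyi i) (hy i).2
        constructor
        · rw [hcdef]
          rw [le_div_iff₀ h0]
          linarith
        · rw [hcdef]
          rw [div_le_iff₀ h0]
          linarith
      obtain ⟨x, hsol, hxt⟩ := key c hc
      refine ⟨x, hsol, ?_⟩
      rw [hxt]
      funext i
      show Real.exp (Real.log (y i) / t * t) = y i
      rw [div_mul_cancel₀ _ (ne_of_gt h0), Real.exp_log (hyi i)]
end
end
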